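/- arXiv:1502.05341 — 11 statements merged into one kernel-verified Lean document; each statement's English description precedes it below -/
import Mathlib

section
/- Let A be a right alternative metabelian algebra over a field of characteristic ≠ 2. Then for all a, b, x, y ∈ A one has ((ab)·x)·y + ((ab)·y)·x = 0 (right multiplication operators anticommute on A²). -/
theorem stmt_1_general {A : Type*} [NonUnitalNonAssocRing A]
    (hra : ∀ x y z : A, ((x * y) * z - x * (y * z)) + ((x * z) * y - x * (z * y)) = 0)
    (hme : ∀ x y z t : A, (x * y) * (z * t) = 0)
    (a b x y : A) : ((a * b) * x) * y + ((a * b) * y) * x = 0 := by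
  have h := hra (a * b) x y
  rwa [hme, hme, sub_zero, sub_zero] at h

theorem stmt_1 {F A : Type*} [Field F] [NonUnitalNonAssocRing A]
    [Module F A] [SMulCommClass F A A] [IsScalarTower F A A]
    (hchar : (2 : F) ≠ 0)
    (hra : ∀ x y z : A, ((x * y) * z - x * (y * z)) + ((x * z) * y - x * (z * y)) = 0)
    (hme : ∀ x y z t : A, (x * y) * (z * t) = 0)
    (a b x y : A) : ((a * b) * x) * y + ((a * b) * y) * x = 0 :=
  stmt_1_general hra hme a b x y
end

section
/- Let A be a right alternative metabelian algebra over a field of characteristic ≠ 2. Then for every w ∈ A·A (a product of two elements) and all x, y ∈ A: y·(w·x) + y·(x·w) = (y·w)·x. Equivalently, on A² the operator identity [R_x, L_y] = −L_x L_y holds, where R_x(a) = a·x, L_x(a) = x·a. -/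
theorem mul_add_mul_swap_of_rightAlternative {A : Type*} [NonUnitalNonAssocRing A]
    (hra : ∀ x y z : A, ((x * y) * z - x * (y * z)) + ((x * z) * y - x * (z * y)) = 0)
    (y w x : A) : y * (w * x) + y * (x * w) = y * w * x + y * x * w := by
  linear_combination (norm := abel) -hra y w x

theorem stmt_2_general {A : Type*} [NonUnitalNonAssocRing A]
    (hra : ∀ x y z : A, ((x * y) * z - x * (y * z)) + ((x * z) * y - x * (z * y)) = 0)
    (hme : ∀ x y z t : A, (x * y) * (z * t) = 0)
    (a b x y : A) : y * ((a * b) * x) + y * (x * (a * b)) = (y * (a * b)) * x := by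
  rw [mul_add_mul_swap_of_rightAlternative hra, hme, add_zero]

theorem stmt_2 {F A : Type*} [Field F] [NonUnitalNonAssocRing A]
    [Module F A] [SMulCommClass F A A] [IsScalarTower F A A]
    (hchar : (2 : F) ≠ 0)
    (hra : ∀ x y z : A, ((x * y) * z - x * (y * z)) + ((x * z) * y - x * (z * y)) = 0)
    (hme : ∀ x y z t : A, (x * y) * (z * t) = 0)
    (a b x y : A) : y * ((a * b) * x) + y * (x * (a * b)) = (y * (a * b)) * x :=
  stmt_2_general hra hme a b x y
end

section
/- Let A be a right alternative metabelian algebra over a field of characteristic ≠ 2. Then for every w = ab with a,b ∈ A and all x, y, z ∈ A: z·((w·x)·y) = ((z·w)·x)·y (the operator R_x R_y commutes with every L_z on A²). -/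
/-!
Linearized right alternativity reads `(x, y, z) = -(x, z, y)`, and in a metabelian algebra every
product of two elements of `A²` vanishes. Applied to `w ∈ A²` this makes right multiplications
anticommute on `A²`: `(w u) v = -(w v) u`. Expanding associators shows that
`D(u, v) = ((z w) u) v - z ((w u) v)` is symmetric in `u, v`, while anticommutativity (for both
`w` and `z w`) makes it antisymmetric. Hence `2 D = 0`, and `D = 0` as `char F ≠ 2`.
-/

def IsRightAlternative (A : Type*) [NonUnitalNonAssocRing A] : Prop :=
  ∀ x y z : A, ((x * y) * z - x * (y * z)) + ((x * z) * y - x * (z * y)) = 0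

def IsMetabelian (A : Type*) [NonUnitalNonAssocRing A] : Prop :=
  ∀ x y z t : A, (x * y) * (z * t) = 0

section

variable {A : Type*} [NonUnitalNonAssocRing A]

theorem IsRightAlternative.mul_mul_eq_of_mul_mul_eq_zero (hra : IsRightAlternative A)
    {x y z : A} (h : (x * z) * y = 0) : x * (y * z) = (x * y) * z - x * (z * y) := by
  have := hra x y z
  rw [h] at this
  linear_combination (norm := abel) -this

theorem IsRightAlternative.mul_mul_mul_add_mul_mul_mul (hra : IsRightAlternative A)
    (hme : IsMetabelian A) (p q u v : A) :
    ((p * q) * u) * v + ((p * q) * v) * u = 0 := by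
  have := hra (p * q) u v
  rw [hme p q u v, hme p q v u] at this
  linear_combination (norm := abel) this

theorem IsRightAlternative.mul_mul_mul_sub_mul_mul_mul (hra : IsRightAlternative A)
    (hme : IsMetabelian A) (a b z u v : A) :
    ((z * (a * b)) * u) * v - z * (((a * b) * u) * v)
      = z * ((u * (a * b)) * v) + z * ((v * (a * b)) * u) := by
  set w := a * b
  have hzwuv : z * ((w * u) * v) = (z * (w * u)) * v - z * (v * (w * u)) :=
    hra.mul_mul_eq_of_mul_mul_eq_zero (hme z v w u)
  have hzwu : z * (w * u) = (z * w) * u - z * (u * w) :=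
    hra.mul_mul_eq_of_mul_mul_eq_zero (hme z u a b)
  have hvwu : v * (w * u) = (v * w) * u - v * (u * w) :=
    hra.mul_mul_eq_of_mul_mul_eq_zero (hme v u a b)
  have hzuwv : z * ((u * w) * v) = (z * (u * w)) * v - z * (v * (u * w)) :=
    hra.mul_mul_eq_of_mul_mul_eq_zero (hme z v u w)
  rw [hzwuv, hzwu, hvwu, hzuwv, sub_mul, mul_sub]
  abel

theorem IsRightAlternative.mul_mul_mul_sub_mul_mul_mul_add_self (hra : IsRightAlternative A)
    (hme : IsMetabelian A) (a b x y z : A) :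
    (((z * (a * b)) * x) * y - z * (((a * b) * x) * y))
      + (((z * (a * b)) * x) * y - z * (((a * b) * x) * y)) = 0 := by
  have hsymm := hra.mul_mul_mul_sub_mul_mul_mul hme a b z x y
  have hsymm' := hra.mul_mul_mul_sub_mul_mul_mul hme a b z y x
  have hzw := hra.mul_mul_mul_add_mul_mul_mul hme z (a * b) x y
  have hw := congrArg (z * ·) (hra.mul_mul_mul_add_mul_mul_mul hme a b x y)
  simp only [mul_add, mul_zero] at hw
  linear_combination (norm := abel) hsymm - hsymm' + hzw - hw

end

theorem stmt_3_general {F A : Type*} [Field F] [NonUnitalNonAssocRing A]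
    [Module F A]
    (hchar : (2 : F) ≠ 0)
    (hra : ∀ x y z : A, ((x * y) * z - x * (y * z)) + ((x * z) * y - x * (z * y)) = 0)
    (hme : ∀ x y z t : A, (x * y) * (z * t) = 0)
    (a b x y z : A) : z * (((a * b) * x) * y) = ((z * (a * b)) * x) * y := by
  have htwice : (2 : F) • (((z * (a * b)) * x) * y - z * (((a * b) * x) * y)) = 0 := by
    rw [two_smul]
    exact IsRightAlternative.mul_mul_mul_sub_mul_mul_mul_add_self hra hme a b x y z
  exact (sub_eq_zero.mp ((smul_eq_zero.mp htwice).resolve_left hchar)).symm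

theorem stmt_3 {F A : Type*} [Field F] [NonUnitalNonAssocRing A]
    [Module F A] [SMulCommClass F A A] [IsScalarTower F A A]
    (hchar : (2 : F) ≠ 0)
    (hra : ∀ x y z : A, ((x * y) * z - x * (y * z)) + ((x * z) * y - x * (z * y)) = 0)
    (hme : ∀ x y z t : A, (x * y) * (z * t) = 0)
    (a b x y z : A) : z * (((a * b) * x) * y) = ((z * (a * b)) * x) * y :=
  stmt_3_general hchar hra hme a b x y z
end

section
/- Let A be a right alternative metabelian algebra over a field of characteristic ≠ 2. Then for every w ∈ A·A and all x, y, z ∈ A: ((w·x)·y)·z = ((w·z)·x)·y. In particular the product R_x R_y of two right multiplications lies in the center of the multiplication algebra acting on A². -/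
/-! Metabelianity kills `w (u v)` for `w ∈ A²`, so on `A²` the right alternative law reads
`R_u R_v = -R_v R_u`. As `A²` is a right ideal, two such anticommutations turn `((w x) y) z`
into `((w z) x) y`. -/

theorem mul_mul_eq_neg_mul_mul_of_rightAlternative {A : Type*} [NonUnitalNonAssocRing A]
    (hra : ∀ x y z : A, ((x * y) * z - x * (y * z)) + ((x * z) * y - x * (z * y)) = 0)
    {w u v : A} (huv : w * (u * v) = 0) (hvu : w * (v * u) = 0) :
    (w * u) * v = -((w * v) * u) := by
  have h := hra w u v
  rw [huv, hvu, sub_zero, sub_zero] at h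
  exact eq_neg_of_add_eq_zero_left h

theorem mul_mul_mul_eq_neg_of_metabelian {A : Type*} [NonUnitalNonAssocRing A]
    (hra : ∀ x y z : A, ((x * y) * z - x * (y * z)) + ((x * z) * y - x * (z * y)) = 0)
    (hme : ∀ x y z t : A, (x * y) * (z * t) = 0) (p q u v : A) :
    ((p * q) * u) * v = -(((p * q) * v) * u) :=
  mul_mul_eq_neg_mul_mul_of_rightAlternative hra (hme p q u v) (hme p q v u)

theorem stmt_4_general {A : Type*} [NonUnitalNonAssocRing A]
    (hra : ∀ x y z : A, ((x * y) * z - x * (y * z)) + ((x * z) * y - x * (z * y)) = 0)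
    (hme : ∀ x y z t : A, (x * y) * (z * t) = 0)
    (a b x y z : A) : (((a * b) * x) * y) * z = (((a * b) * z) * x) * y := by
  calc (((a * b) * x) * y) * z = -((((a * b) * x) * z) * y) :=
        mul_mul_mul_eq_neg_of_metabelian hra hme (a * b) x y z
    _ = (((a * b) * z) * x) * y := by
        rw [mul_mul_mul_eq_neg_of_metabelian hra hme a b z x, neg_mul]

theorem stmt_4 {F A : Type*} [Field F] [NonUnitalNonAssocRing A]
    [Module F A] [SMulCommClass F A A] [IsScalarTower F A A]
    (hchar : (2 : F) ≠ 0)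
    (hra : ∀ x y z : A, ((x * y) * z - x * (y * z)) + ((x * z) * y - x * (z * y)) = 0)
    (hme : ∀ x y z t : A, (x * y) * (z * t) = 0)
    (a b x y z : A) : (((a * b) * x) * y) * z = (((a * b) * z) * x) * y :=
  stmt_4_general hra hme a b x y z
end

section
/- Let A be a right alternative metabelian algebra over a field of characteristic ≠ 2. Set H_x = R_x − L_x. Then on A² the operator identity H_x H_y = R_x R_y − 2[R_x, L_y] − L_x R_y − L_y R_x holds; i.e., for every w ∈ A·A and all x,y ∈ A, applying both sides to w (operators composed left-to-right) gives equal elements of A. -/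
/-! On `w ∈ A²` the metabelian identity kills `(yx)w`, so right alternativity `(y,w,x) = -(y,x,w)`
reduces to `(yw)x = y(wx) + y(xw)`; substituting this, both sides expand to the same element. -/

theorem mul_mul_eq_mul_add_mul_of_mul_mul_eq_zero {A : Type*} [NonUnitalNonAssocRing A]
    (hra : ∀ x y z : A, ((x * y) * z - x * (y * z)) + ((x * z) * y - x * (z * y)) = 0)
    {y w x : A} (h : (y * x) * w = 0) :
    (y * w) * x = y * (w * x) + y * (x * w) := by
  have := hra y w x
  rw [h] at this
  linear_combination (norm := abel) this

theorem stmt_5_general {A : Type*} [NonUnitalNonAssocRing A]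
    (hra : ∀ x y z : A, ((x * y) * z - x * (y * z)) + ((x * z) * y - x * (z * y)) = 0)
    (hme : ∀ x y z t : A, (x * y) * (z * t) = 0)
    (a b x y : A) :
    (((a * b) * x - x * (a * b)) * y) - y * ((a * b) * x - x * (a * b)) =
      ((a * b) * x) * y
        - 2 • (y * ((a * b) * x) - (y * (a * b)) * x)
        - (x * (a * b)) * y - (y * (a * b)) * x := by
  rw [mul_mul_eq_mul_add_mul_of_mul_mul_eq_zero hra (hme y x a b), two_smul, sub_mul, mul_sub]
  abel

theorem stmt_5 {F A : Type*} [Field F] [NonUnitalNonAssocRing A]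
    [Module F A] [SMulCommClass F A A] [IsScalarTower F A A]
    (hchar : (2 : F) ≠ 0)
    (hra : ∀ x y z : A, ((x * y) * z - x * (y * z)) + ((x * z) * y - x * (z * y)) = 0)
    (hme : ∀ x y z t : A, (x * y) * (z * t) = 0)
    (a b x y : A) :
    (((a * b) * x - x * (a * b)) * y) - y * ((a * b) * x - x * (a * b)) =
      ((a * b) * x) * y
        - 2 • (y * ((a * b) * x) - (y * (a * b)) * x)
        - (x * (a * b)) * y - (y * (a * b)) * x :=
  stmt_5_general hra hme a b x y
end

section
/- Let A be a right alternative metabelian algebra over a field of characteristic ≠ 2. With H_x = R_x − L_x, the operator identity 3 R_x R_y + H_x H_y = 2[R_x, H_y] + H_x R_y + H_y R_x holds on A²: for every w ∈ A·A and all x,y ∈ A both sides applied to w agree. -/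
/-! For `w ∈ A²`, right alternativity together with `w (x y) = 0` and `(y x) w = 0` gives
`(w x) y = -(w y) x` and `(y w) x = y (w x) + y (x w)`. After these substitutions both sides
of the operator identity applied to `w` are the same combination of `(w x) y`, `y (w x)` and
`y (x w)`. -/

section RightAlternativeMetabelian

variable {A : Type*} [NonUnitalNonAssocRing A]

theorem mul_mul_mul_mul_eq_neg
    (hra : ∀ x y z : A, ((x * y) * z - x * (y * z)) + ((x * z) * y - x * (z * y)) = 0)
    (hme : ∀ x y z t : A, (x * y) * (z * t) = 0) (a b x y : A) :
    ((a * b) * x) * y = -(((a * b) * y) * x) := by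
  have h := hra (a * b) x y
  rw [hme a b x y, hme a b y x, sub_zero, sub_zero] at h
  exact add_eq_zero_iff_eq_neg.mp h

theorem mul_mul_mul_eq_mul_add_mul
    (hra : ∀ x y z : A, ((x * y) * z - x * (y * z)) + ((x * z) * y - x * (z * y)) = 0)
    (hme : ∀ x y z t : A, (x * y) * (z * t) = 0) (a b x y : A) :
    (y * (a * b)) * x = y * ((a * b) * x) + y * (x * (a * b)) := by
  have h := hra y (a * b) x
  rw [hme y x a b, zero_sub] at h
  rw [← sub_eq_zero, ← h]
  abel

end RightAlternativeMetabelian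

theorem stmt_6_general {A : Type*} [NonUnitalNonAssocRing A]
    (hra : ∀ x y z : A, ((x * y) * z - x * (y * z)) + ((x * z) * y - x * (z * y)) = 0)
    (hme : ∀ x y z t : A, (x * y) * (z * t) = 0)
    (a b x y : A) :
    3 • (((a * b) * x) * y)
      + ((((a * b) * x - x * (a * b)) * y) - y * ((a * b) * x - x * (a * b))) =
    2 • ((((a * b) * x) * y - y * ((a * b) * x))
          - (((a * b) * y - y * (a * b)) * x))
      + (((a * b) * x - x * (a * b)) * y)
      + (((a * b) * y - y * (a * b)) * x) := by
  rw [sub_mul, sub_mul, mul_sub, mul_mul_mul_mul_eq_neg hra hme a b x y,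
    mul_mul_mul_eq_mul_add_mul hra hme a b x y]
  abel

theorem stmt_6 {F A : Type*} [Field F] [NonUnitalNonAssocRing A]
    [Module F A] [SMulCommClass F A A] [IsScalarTower F A A]
    (hchar : (2 : F) ≠ 0)
    (hra : ∀ x y z : A, ((x * y) * z - x * (y * z)) + ((x * z) * y - x * (z * y)) = 0)
    (hme : ∀ x y z t : A, (x * y) * (z * t) = 0)
    (a b x y : A) :
    3 • (((a * b) * x) * y)
      + ((((a * b) * x - x * (a * b)) * y) - y * ((a * b) * x - x * (a * b))) =
    2 • ((((a * b) * x) * y - y * ((a * b) * x))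
          - (((a * b) * y - y * (a * b)) * x))
      + (((a * b) * x - x * (a * b)) * y)
      + (((a * b) * y - y * (a * b)) * x) :=
  stmt_6_general hra hme a b x y
end

section
/- Let A be a right alternative metabelian algebra over a field of characteristic ≠ 2. Then for all x, y ∈ A: y·(x²·x) = 0, i.e., the cube of any element annihilates A from the right side of multiplication (y·x³ = 0 for all y). -/
/-!
Setting `z = y` in the right alternative identity and dividing by `2` gives `(a * b) * b =
a * (b * b)`. Hence `y * x² = (y * x) * x`, and `(y * x²) * x = ((y * x) * x) * x = (y * x) * x²`,
which vanishes by the metabelian identity together with `(y * x) * x²`. Feeding this into the right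
alternative identity for `y, x², x`, and using `x * x² = x² * x`, leaves `-2 (y * x³) = 0`.
-/

theorem eq_zero_of_add_self_eq_zero_of_two_ne_zero {F A : Type*} [DivisionRing F]
    [AddCommGroup A] [Module F A] (hchar : (2 : F) ≠ 0) {a : A} (h : a + a = 0) : a = 0 := by
  rw [← two_smul F a] at h
  exact (smul_eq_zero.mp h).resolve_left hchar

theorem mul_mul_self_eq_of_associator_add_swap {F A : Type*} [DivisionRing F]
    [NonUnitalNonAssocRing A] [Module F A] (hchar : (2 : F) ≠ 0)
    (hra : ∀ x y z : A, associator x y z + associator x z y = 0) (a b : A) :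
    (a * b) * b = a * (b * b) :=
  sub_eq_zero.mp (eq_zero_of_add_self_eq_zero_of_two_ne_zero hchar (hra a b b))

theorem stmt_7_general {F A : Type*} [Field F] [NonUnitalNonAssocRing A]
    [Module F A]
    (hchar : (2 : F) ≠ 0)
    (hra : ∀ x y z : A, ((x * y) * z - x * (y * z)) + ((x * z) * y - x * (z * y)) = 0)
    (hme : ∀ x y z t : A, (x * y) * (z * t) = 0)
    (x y : A) : y * ((x * x) * x) = 0 := by
  have hassoc := mul_mul_self_eq_of_associator_add_swap hchar hra
  have hcube_comm : x * (x * x) = (x * x) * x := (hassoc x x).symm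
  have hleft : (y * (x * x)) * x = 0 := by
    rw [← hassoc y x, hassoc (y * x) x]
    exact hme y x x x
  have h := hra y (x * x) x
  rw [hleft, hme y x x x, hcube_comm, zero_sub] at h
  exact neg_eq_zero.mp (eq_zero_of_add_self_eq_zero_of_two_ne_zero hchar h)

theorem stmt_7 {F A : Type*} [Field F] [NonUnitalNonAssocRing A]
    [Module F A] [SMulCommClass F A A] [IsScalarTower F A A]
    (hchar : (2 : F) ≠ 0)
    (hra : ∀ x y z : A, ((x * y) * z - x * (y * z)) + ((x * z) * y - x * (z * y)) = 0)
    (hme : ∀ x y z t : A, (x * y) * (z * t) = 0)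
    (x y : A) : y * ((x * x) * x) = 0 :=
  stmt_7_general hchar hra hme x y
end

section
/- Let A be a right alternative metabelian algebra over a field of characteristic ≠ 2,3. Then the full linearization of y·x³ = 0 holds: for all y, x₁, x₂, x₃ ∈ A, the sum over all six permutations σ of {1,2,3} of y·((x_{σ(1)}·x_{σ(2)})·x_{σ(3)}) equals 0. -/
open Equiv

/-!
Write `S = ∑ σ, y ((x_σ0 x_σ1) x_σ2)` and `S' = ∑ σ, y (x_σ0 (x_σ1 x_σ2))`. Right alternativity,
`(a, b, c) = -(a, c, b)` for the associator, multiplied on the left by `y` gives `S = S'`.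
The instance `(y, ab, c) + (y, c, ab) = 0`, in which `(yc)(ab)` vanishes by metabelianity, gives
`S + S' = ∑ σ, (y (x_σ0 x_σ1)) x_σ2`. Right alternativity for `(y, b, c)` turns this sum into
`∑ σ, ((y x_σ0) x_σ1) x_σ2`, which vanishes since `(ya, b, c) + (ya, c, b) = 0` and
`(ya)(bc) = 0`. Hence `2 S = 0`.
-/

section PermSum

variable {α M : Type*}

def permSum [AddCommMonoid M] (f : α → α → α → M) (x : Fin 3 → α) : M :=
  ∑ σ : Perm (Fin 3), f (x (σ 0)) (x (σ 1)) (x (σ 2))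

theorem permSum_eq [AddCommMonoid M] (f : α → α → α → M) (x : Fin 3 → α) :
    permSum f x = f (x 0) (x 1) (x 2) + f (x 0) (x 2) (x 1) + f (x 1) (x 0) (x 2)
      + f (x 1) (x 2) (x 0) + f (x 2) (x 0) (x 1) + f (x 2) (x 1) (x 0) := by
  rw [permSum, show (Finset.univ : Finset (Perm (Fin 3))) =
      {1, swap 1 2, swap 0 1, swap 0 1 * swap 1 2, swap 0 2 * swap 1 2, swap 0 2} by decide]
  simp +decide [Finset.sum_insert, swap_apply_def, add_assoc]

theorem permSum_rotate [AddCommMonoid M] (f : α → α → α → M) (x : Fin 3 → α) :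
    permSum (fun a b c => f c a b) x = permSum f x := by
  simp only [permSum_eq]
  abel

theorem permSum_eq_permSum_of_add_swap [AddCommGroup M] {f g : α → α → α → M}
    (h : ∀ a b c, f a b c + f a c b = g a b c + g a c b) (x : Fin 3 → α) :
    permSum f x = permSum g x := by
  simp only [permSum_eq]
  linear_combination (norm := abel) h (x 0) (x 1) (x 2) + h (x 1) (x 0) (x 2) + h (x 2) (x 0) (x 1)

theorem permSum_eq_zero_of_add_swap [AddCommGroup M] {f : α → α → α → M}
    (h : ∀ a b c, f a b c + f a c b = 0) (x : Fin 3 → α) : permSum f x = 0 := by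
  have : permSum f x = permSum (fun _ _ _ => (0 : M)) x :=
    permSum_eq_permSum_of_add_swap (by simpa using h) x
  simpa [permSum] using this

end PermSum

section RightAlternativeMetabelian

variable {A : Type*} [NonUnitalNonAssocRing A]
  (hra : ∀ x y z : A, ((x * y) * z - x * (y * z)) + ((x * z) * y - x * (z * y)) = 0)
  (hme : ∀ x y z t : A, (x * y) * (z * t) = 0)
include hra

theorem permSum_mul_mul_assoc (y : A) (x : Fin 3 → A) :
    permSum (fun a b c => y * ((a * b) * c)) x = permSum (fun a b c => y * (a * (b * c))) x := by
  refine permSum_eq_permSum_of_add_swap (fun a b c => ?_) x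
  have := congrArg (y * ·) (hra a b c)
  simp only [mul_add, mul_sub, mul_zero] at this
  linear_combination (norm := abel) this

include hme

theorem permSum_mul_mul_assoc_add (y : A) (x : Fin 3 → A) :
    permSum (fun a b c => y * ((a * b) * c)) x + permSum (fun a b c => y * (a * (b * c))) x =
      permSum (fun a b c => (y * (a * b)) * c) x := by
  rw [← permSum_rotate (fun a b c => y * (a * (b * c))), permSum, permSum, permSum,
    ← Finset.sum_add_distrib]
  refine Finset.sum_congr rfl fun σ _ => ?_
  have := hra y (x (σ 0) * x (σ 1)) (x (σ 2))
  rw [hme] at this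
  linear_combination (norm := abel) -this

theorem permSum_mul_mul_mul_eq_zero (y : A) (x : Fin 3 → A) :
    permSum (fun a b c => (y * (a * b)) * c) x = 0 := by
  rw [permSum_rotate (fun a b c => (y * (b * c)) * a)]
  have hswap : ∀ a b c : A, (y * (b * c)) * a + (y * (c * b)) * a
      = ((y * b) * c) * a + ((y * c) * b) * a := fun a b c => by
    have := congrArg (· * a) (hra y b c)
    simp only [add_mul, sub_mul, zero_mul] at this
    linear_combination (norm := abel) -this
  rw [permSum_eq_permSum_of_add_swap hswap, ← permSum_rotate (fun a b c => ((y * b) * c) * a)]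
  refine permSum_eq_zero_of_add_swap (fun a b c => ?_) x
  have := hra (y * a) b c
  rw [hme, hme] at this
  linear_combination (norm := abel) this

end RightAlternativeMetabelian

theorem stmt_8_general {F A : Type*} [Field F] [NonUnitalNonAssocRing A]
    [Module F A]
    (hchar2 : (2 : F) ≠ 0)
    (hra : ∀ x y z : A, ((x * y) * z - x * (y * z)) + ((x * z) * y - x * (z * y)) = 0)
    (hme : ∀ x y z t : A, (x * y) * (z * t) = 0)
    (y : A) (x : Fin 3 → A) :
    ∑ σ : Equiv.Perm (Fin 3), y * ((x (σ 0) * x (σ 1)) * x (σ 2)) = 0 := by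
  change permSum (fun a b c => y * ((a * b) * c)) x = 0
  have htwice : (2 : F) • permSum (fun a b c => y * ((a * b) * c)) x = 0 := by
    rw [two_smul]
    nth_rewrite 2 [permSum_mul_mul_assoc hra]
    rw [permSum_mul_mul_assoc_add hra hme, permSum_mul_mul_mul_eq_zero hra hme]
  exact (smul_eq_zero.mp htwice).resolve_left hchar2

/-- full linearization of y·x³ = 0 in a right alternative
metabelian algebra over a field of characteristic ≠ 2,3. -/
theorem stmt_8 {F A : Type*} [Field F] [NonUnitalNonAssocRing A]
    [Module F A] [SMulCommClass F A A] [IsScalarTower F A A]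
    (hchar2 : (2 : F) ≠ 0) (hchar3 : (3 : F) ≠ 0)
    (hra : ∀ x y z : A, ((x * y) * z - x * (y * z)) + ((x * z) * y - x * (z * y)) = 0)
    (hme : ∀ x y z t : A, (x * y) * (z * t) = 0)
    (y : A) (x : Fin 3 → A) :
    ∑ σ : Equiv.Perm (Fin 3), y * ((x (σ 0) * x (σ 1)) * x (σ 2)) = 0 :=
  stmt_8_general hchar2 hra hme y x
end

section
/- Let ε ∈ {0,1} ⊂ F where char F ≠ 2. Let A^(ε) be the F-vector space with basis {x} ∪ {a_{i,j} : i,j ≥ 0} and multiplication defined on basis elements by: x·x = (ε/2)·a_{0,0}; a_{i,j}·x = a_{i,j+1}; x·a_{i,2j} = (−1)^i (a_{i,2j+1} − a_{i+1,2j}); x·a_{i,2j+1} = ((−1)^i/2)(a_{i,2j+2} − 2a_{i+1,2j+1} + a_{i+2,2j}); all other products of basis elements zero. Then A^(ε) is metabelian: (u·v)·(w·t) = 0 for all u,v,w,t ∈ A^(ε). -/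
/-!
No product of basis elements has an `x`-component, so `A·A` lies in the span of the `a_{i,j}`;
since all products `a_{i,j}·a_{k,l}` vanish, this span multiplies to zero.
-/

/-- Basis of the algebra `A^(ε)`: `none` is the element `x`,
`some (i,j)` is the element `a_{i,j}`. -/
abbrev AeBasis : Type := Option (ℕ × ℕ)

/-- The underlying space of `A^(ε)`: formal `F`-linear combinations of basis elements. -/
abbrev AeSpace (F : Type*) [Field F] : Type _ := AeBasis →₀ F

/-- Product of two basis elements of `A^(ε)`:
`x·x = (ε/2)·a_{0,0}`, `a_{i,j}·x = a_{i,j+1}`,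
`x·a_{i,2j} = (−1)^i (a_{i,2j+1} − a_{i+1,2j})`,
`x·a_{i,2j+1} = ((−1)^i/2)(a_{i,2j+2} − 2a_{i+1,2j+1} + a_{i+2,2j})`,
and all other products of basis elements are zero. -/
noncomputable def mulB (F : Type*) [Field F] (ε : F) : AeBasis → AeBasis → AeSpace F
  | none, none => (ε / 2) • Finsupp.single (some (0, 0)) 1
  | some (i, j), none => Finsupp.single (some (i, j + 1)) 1
  | none, some (i, j) =>
      if j % 2 = 0 then
        ((-1 : F) ^ i) • (Finsupp.single (some (i, j + 1)) (1 : F)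
          - Finsupp.single (some (i + 1, j)) 1)
      else
        (((-1 : F) ^ i) / 2) • (Finsupp.single (some (i, j + 1)) (1 : F)
          - (2 : F) • Finsupp.single (some (i + 1, j)) (1 : F)
          + Finsupp.single (some (i + 2, j - 1)) 1)
  | some _, some _ => 0

/-- The bilinear multiplication of `A^(ε)`, extending `mulB`. -/
noncomputable def mulA (F : Type*) [Field F] (ε : F) (u v : AeSpace F) : AeSpace F :=
  u.sum fun b cb => v.sum fun b' cb' => (cb * cb') • mulB F ε b b'

/-- The generator `x` of `A^(ε)`. -/
noncomputable def xEl (F : Type*) [Field F] : AeSpace F := Finsupp.single none 1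

/-- The generator `a_{i,j}` of `A^(ε)`. -/
noncomputable def aEl (F : Type*) [Field F] (i j : ℕ) : AeSpace F :=
  Finsupp.single (some (i, j)) 1

section

variable {F : Type*} [Field F] (ε : F)

theorem mulB_apply_none (b b' : AeBasis) : mulB F ε b b' none = 0 := by
  rcases b with _ | ⟨i, j⟩ <;> rcases b' with _ | ⟨i', j'⟩ <;> simp [mulB]
  split <;> simp

theorem mulA_apply_none (u v : AeSpace F) : mulA F ε u v none = 0 := by
  simp [mulA, Finsupp.sum_apply, mulB_apply_none]

theorem mulA_eq_zero_of_apply_none {u v : AeSpace F} (hu : u none = 0) (hv : v none = 0) :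
    mulA F ε u v = 0 := by
  refine Finset.sum_eq_zero fun b hb => Finset.sum_eq_zero fun b' hb' => ?_
  obtain ⟨p, rfl⟩ := Option.ne_none_iff_exists'.mp (ne_of_mem_of_not_mem hb (by simpa using hu))
  obtain ⟨p', rfl⟩ := Option.ne_none_iff_exists'.mp (ne_of_mem_of_not_mem hb' (by simpa using hv))
  simp [mulB]

end

theorem stmt_10_general {F : Type*} [Field F]
    (ε : F) (u v w t : AeSpace F) :
    mulA F ε (mulA F ε u v) (mulA F ε w t) = 0 :=
  mulA_eq_zero_of_apply_none ε (mulA_apply_none ε u v) (mulA_apply_none ε w t)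

/-- `A^(ε)` is metabelian. -/
theorem stmt_10 {F : Type*} [Field F] (hchar : (2 : F) ≠ 0)
    (ε : F) (hε : ε = 0 ∨ ε = 1) (u v w t : AeSpace F) :
    mulA F ε (mulA F ε u v) (mulA F ε w t) = 0 :=
  stmt_10_general ε u v w t
end

section
/- Let A^(ε) be the algebra defined on the basis {x} ∪ {a_{i,j}} with multiplication x·x = (ε/2)a_{0,0}, a_{i,j}·x = a_{i,j+1}, x·a_{i,2j} = (−1)^i(a_{i,2j+1} − a_{i+1,2j}), x·a_{i,2j+1} = ((−1)^i/2)(a_{i,2j+2} − 2a_{i+1,2j+1} + a_{i+2,2j}), other products zero, over a field of characteristic ≠ 2. Then for all i,j ≥ 0: (x·a_{i,j})·x − x·(a_{i,j}·x) = (−1)^{i+j} · x·(x·a_{i,j}). -/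
namespace AeSpace

variable {F : Type*} [Field F] (ε : F)

noncomputable def mulBilin : AeSpace F →ₗ[F] AeSpace F →ₗ[F] AeSpace F :=
  Finsupp.lift _ F _ fun b => Finsupp.lift _ F _ (mulB F ε b)

theorem mulBilin_apply (u v : AeSpace F) : mulBilin ε u v = mulA F ε u v := by
  simp [mulBilin, mulA, Finsupp.lift_apply, Finsupp.smul_sum, mul_smul]

theorem mulBilin_single_single (b b' : AeBasis) :
    mulBilin ε (Finsupp.single b 1) (Finsupp.single b' 1) = mulB F ε b b' := by
  simp [mulBilin]

theorem mulBilin_aEl_xEl (i j : ℕ) : mulBilin ε (aEl F i j) (xEl F) = aEl F i (j + 1) :=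
  mulBilin_single_single ε _ _

theorem mulBilin_xEl_aEl_even (i k : ℕ) :
    mulBilin ε (xEl F) (aEl F i (2 * k)) =
      (-1 : F) ^ i • (aEl F i (2 * k + 1) - aEl F (i + 1) (2 * k)) := by
  rw [xEl, aEl, mulBilin_single_single, mulB, if_pos (by omega)]
  rfl

theorem mulBilin_xEl_aEl_odd (i k : ℕ) :
    mulBilin ε (xEl F) (aEl F i (2 * k + 1)) =
      ((-1 : F) ^ i / 2) • (aEl F i (2 * k + 2) - (2 : F) • aEl F (i + 1) (2 * k + 1)
        + aEl F (i + 2) (2 * k)) := by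
  rw [xEl, aEl, mulBilin_single_single, mulB, if_neg (by omega)]
  rfl

theorem mulBilin_xEl_mulBilin_xEl_aEl (h2 : (2 : F) ≠ 0) (i j : ℕ) :
    mulBilin ε (xEl F) (mulBilin ε (xEl F) (aEl F i j)) =
      (2 : F)⁻¹ • (aEl F i (j + 2) - aEl F (i + 2) j) := by
  obtain ⟨k, rfl | rfl⟩ := Nat.even_or_odd' j
  · rw [mulBilin_xEl_aEl_even, map_smul, map_sub, mulBilin_xEl_aEl_odd, mulBilin_xEl_aEl_even]
    rcases neg_one_pow_eq_or F i with hs | hs <;> simp only [pow_add, hs] <;>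
      match_scalars <;> field_simp <;> ring
  · rw [mulBilin_xEl_aEl_odd, map_smul, map_add, map_sub, map_smul, mulBilin_xEl_aEl_odd,
      show 2 * k + 2 = 2 * (k + 1) by ring, mulBilin_xEl_aEl_even, mulBilin_xEl_aEl_even]
    rcases neg_one_pow_eq_or F i with hs | hs <;> simp only [pow_add, hs] <;>
      match_scalars <;> field_simp <;> ring

theorem associator_xEl_aEl_xEl (h2 : (2 : F) ≠ 0) (i j : ℕ) :
    mulBilin ε (mulBilin ε (xEl F) (aEl F i j)) (xEl F)
        - mulBilin ε (xEl F) (mulBilin ε (aEl F i j) (xEl F)) =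
      (-1 : F) ^ (i + j) • (2 : F)⁻¹ • (aEl F i (j + 2) - aEl F (i + 2) j) := by
  obtain ⟨k, rfl | rfl⟩ := Nat.even_or_odd' j
  · rw [mulBilin_xEl_aEl_even, mulBilin_aEl_xEl, mulBilin_xEl_aEl_odd, map_smul, map_sub,
      LinearMap.smul_apply, LinearMap.sub_apply, mulBilin_aEl_xEl, mulBilin_aEl_xEl, pow_add,
      pow_mul]
    match_scalars <;> field_simp <;> ring
  · rw [mulBilin_xEl_aEl_odd, mulBilin_aEl_xEl, show 2 * k + 1 + 1 = 2 * (k + 1) by ring,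
      mulBilin_xEl_aEl_even, map_smul, map_add, map_sub, map_smul, LinearMap.smul_apply,
      LinearMap.add_apply, LinearMap.sub_apply, LinearMap.smul_apply, mulBilin_aEl_xEl,
      mulBilin_aEl_xEl, mulBilin_aEl_xEl, pow_add, pow_succ, pow_mul]
    match_scalars <;> field_simp <;> ring

end AeSpace

theorem stmt_11_general {F : Type*} [Field F] (hchar : (2 : F) ≠ 0)
    (ε : F) (i j : ℕ) :
    mulA F ε (mulA F ε (xEl F) (aEl F i j)) (xEl F)
      - mulA F ε (xEl F) (mulA F ε (aEl F i j) (xEl F))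
      = ((-1 : F) ^ (i + j)) • mulA F ε (xEl F) (mulA F ε (xEl F) (aEl F i j)) := by
  simp only [← AeSpace.mulBilin_apply]
  rw [AeSpace.associator_xEl_aEl_xEl ε hchar, AeSpace.mulBilin_xEl_mulBilin_xEl_aEl ε hchar]

/-- `(x·a_{i,j})·x − x·(a_{i,j}·x) = (−1)^{i+j} · x·(x·a_{i,j})`. -/
theorem stmt_11 {F : Type*} [Field F] (hchar : (2 : F) ≠ 0)
    (ε : F) (hε : ε = 0 ∨ ε = 1) (i j : ℕ) :
    mulA F ε (mulA F ε (xEl F) (aEl F i j)) (xEl F)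
      - mulA F ε (xEl F) (mulA F ε (aEl F i j) (xEl F))
      = ((-1 : F) ^ (i + j)) • mulA F ε (xEl F) (mulA F ε (xEl F) (aEl F i j)) :=
  stmt_11_general hchar ε i j
end

section
/- Let A^(ε) be the superalgebra with even part spanned by {a_{i,j} : i ≡ j (mod 2)} and odd part spanned by {x} ∪ {a_{i,j} : i ≢ j (mod 2)}, with multiplication x·x = (ε/2)a_{0,0}, a_{i,j}·x = a_{i,j+1}, x·a_{i,2j} = (−1)^i(a_{i,2j+1} − a_{i+1,2j}), x·a_{i,2j+1} = ((−1)^i/2)(a_{i,2j+2} − 2a_{i+1,2j+1} + a_{i+2,2j}), other products zero, over a field of characteristic ≠ 2. Then A^(ε) satisfies the super right-alternative identity: for all homogeneous a, b, c, (a,b,c) + (−1)^{|b||c|}(a,c,b) = 0, where (u,v,w) = (uv)w − u(vw) and |·| denotes parity. -/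
/-- Parity of a basis element of `A^(ε)`: `|x| = 1`, `|a_{i,j}| = i + j (mod 2)`. -/
def parB : AeBasis → ℕ
  | none => 1
  | some (i, j) => (i + j) % 2

/-- An element of `A^(ε)` is homogeneous of parity `p` if its support consists of
basis elements of parity `p (mod 2)`. -/
def IsHomog {F : Type*} [Field F] (p : ℕ) (u : AeSpace F) : Prop :=
  ∀ b ∈ u.support, parB b = p % 2

/-!
Let `𝔄` be the span of the `a_{i,j}`. Every product lies in `𝔄` and `𝔄 · 𝔄 = 0`, so an
associator with two arguments in `𝔄` vanishes. By trilinearity it suffices to check basis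
triples, and what remains are `(u, x, x)`, where the sign is `-1` and the two associators
cancel, and `(x, x, a_{m,n})`, `(x, a_{m,n}, x)`. For these, `(x x) a_{m,n} = 0` and a direct
computation in both parities of `n` gives `(x, x, a_{m,n}) = -½ (a_{m,n+2} - a_{m+2,n})` and
`(x, a_{m,n}, x) = (-1)^{m+n} ½ (a_{m,n+2} - a_{m+2,n})`.
-/

namespace Finsupp

theorem trilinear_eq_zero_of_single {α R M : Type*} [CommSemiring R] [AddCommMonoid M]
    [Module R M] (T : (α →₀ R) →ₗ[R] (α →₀ R) →ₗ[R] (α →₀ R) →ₗ[R] M) {a b c : α →₀ R}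
    (h : ∀ i ∈ a.support, ∀ j ∈ b.support, ∀ k ∈ c.support,
      T (single i 1) (single j 1) (single k 1) = 0) :
    T a b c = 0 := by
  rw [← a.sum_single, ← b.sum_single, ← c.sum_single]
  simp only [map_finsuppSum, LinearMap.finsupp_sum_apply]
  refine Finset.sum_eq_zero fun k hk => Finset.sum_eq_zero fun j hj =>
    Finset.sum_eq_zero fun i hi => ?_
  beta_reduce
  rw [← smul_single_one i (a i), ← smul_single_one j (b j), ← smul_single_one k (c k)]
  simp only [map_smul, LinearMap.smul_apply, h i hi j hj k hk, smul_zero]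

end Finsupp

section Associator

variable {R A : Type*} [CommRing R] [AddCommGroup A] [Module R A]

def LinearMap.associator (μ : A →ₗ[R] A →ₗ[R] A) : A →ₗ[R] A →ₗ[R] A →ₗ[R] A :=
  μ.compr₂ μ - (LinearMap.llcomp R A A A).compl₁₂ μ μ

@[simp] theorem LinearMap.associator_apply (μ : A →ₗ[R] A →ₗ[R] A) (u v w : A) :
    μ.associator u v w = μ (μ u v) w - μ u (μ v w) := rfl

def LinearMap.superRightAlternator (μ : A →ₗ[R] A →ₗ[R] A) (s : R) :
    A →ₗ[R] A →ₗ[R] A →ₗ[R] A :=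
  μ.associator + s • (LinearMap.lflip.toLinearMap ∘ₗ μ.associator)

@[simp] theorem LinearMap.superRightAlternator_apply (μ : A →ₗ[R] A →ₗ[R] A) (s : R)
    (u v w : A) :
    μ.superRightAlternator s u v w = μ.associator u v w + s • μ.associator u w v := rfl

variable (μ : A →ₗ[R] A →ₗ[R] A) {I : Submodule R A}

theorem LinearMap.associator_eq_zero_of_two_mem (hμ : ∀ u v, μ u v ∈ I)
    (hI : ∀ u ∈ I, ∀ v ∈ I, μ u v = 0) {u v w : A}
    (h : u ∈ I ∧ v ∈ I ∨ u ∈ I ∧ w ∈ I ∨ v ∈ I ∧ w ∈ I) :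
    μ.associator u v w = 0 := by
  rcases h with ⟨hu, hv⟩ | ⟨hu, hw⟩ | ⟨hv, hw⟩
  · simp [hI u hu v hv, hI u hu _ (hμ v w)]
  · simp [hI _ (hμ u v) w hw, hI u hu _ (hμ v w)]
  · simp [hI _ (hμ u v) w hw, hI v hv w hw]

theorem LinearMap.superRightAlternator_eq_zero_of_two_mem (hμ : ∀ u v, μ u v ∈ I)
    (hI : ∀ u ∈ I, ∀ v ∈ I, μ u v = 0) (s : R) {u v w : A}
    (h : u ∈ I ∧ v ∈ I ∨ u ∈ I ∧ w ∈ I ∨ v ∈ I ∧ w ∈ I) :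
    μ.superRightAlternator s u v w = 0 := by
  have h' : u ∈ I ∧ w ∈ I ∨ u ∈ I ∧ v ∈ I ∨ w ∈ I ∧ v ∈ I := by tauto
  simp [μ.associator_eq_zero_of_two_mem hμ hI h, μ.associator_eq_zero_of_two_mem hμ hI h']

theorem LinearMap.superRightAlternator_neg_one_self (u v : A) :
    μ.superRightAlternator (-1) u v v = 0 := by
  simp

end Associator

section AeAlgebra

variable {F : Type*} [Field F] (ε : F)

noncomputable def mulₗ (F : Type*) [Field F] (ε : F) :
    AeSpace F →ₗ[F] AeSpace F →ₗ[F] AeSpace F :=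
  Finsupp.linearCombination F fun b => Finsupp.linearCombination F (mulB F ε b)

theorem mulₗ_apply (u v : AeSpace F) : mulₗ F ε u v = mulA F ε u v := by
  simp [mulₗ, mulA, Finsupp.linearCombination_apply, Finsupp.sum, Finset.smul_sum, smul_smul,
    LinearMap.sum_apply]

theorem mulₗ_single_single (b b' : AeBasis) :
    mulₗ F ε (Finsupp.single b 1) (Finsupp.single b' 1) = mulB F ε b b' := by
  simp [mulₗ]

local notation:70 u:70 " ⋆ " v:71 => mulₗ F ε u v

theorem aEl_mul_xEl (i j : ℕ) : aEl F i j ⋆ xEl F = aEl F i (j + 1) :=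
  mulₗ_single_single ε (some (i, j)) none

theorem xEl_mul_aEl_of_even {j : ℕ} (hj : Even j) (i : ℕ) :
    xEl F ⋆ aEl F i j = (-1 : F) ^ i • (aEl F i (j + 1) - aEl F (i + 1) j) := by
  simp [xEl, aEl, mulₗ_single_single, mulB, Nat.even_iff.mp hj]

theorem xEl_mul_aEl_of_odd {j : ℕ} (hj : Odd j) (i : ℕ) :
    xEl F ⋆ aEl F i j =
      ((-1 : F) ^ i / 2) •
        (aEl F i (j + 1) - (2 : F) • aEl F (i + 1) j + aEl F (i + 2) (j - 1)) := by
  simp [xEl, aEl, mulₗ_single_single, mulB, Nat.odd_iff.mp hj]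

def aSpan (F : Type*) [Field F] : Submodule F (AeSpace F) :=
  Finsupp.supported F F (Set.range some)

theorem aEl_mem_aSpan (i j : ℕ) : aEl F i j ∈ aSpan F :=
  Finsupp.single_mem_supported F _ (Set.mem_range_self _)

theorem mulB_mem_aSpan (b b' : AeBasis) : mulB F ε b b' ∈ aSpan F := by
  have := aEl_mem_aSpan (F := F)
  rcases b with _ | ⟨i, j⟩ <;> rcases b' with _ | ⟨k, l⟩
  · exact Submodule.smul_mem _ _ (this 0 0)
  · rw [mulB]
    split_ifs
    · exact Submodule.smul_mem _ _ (Submodule.sub_mem _ (this _ _) (this _ _))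
    · exact Submodule.smul_mem _ _ (Submodule.add_mem _
        (Submodule.sub_mem _ (this _ _) (Submodule.smul_mem _ _ (this _ _))) (this _ _))
  · exact this _ _
  · exact Submodule.zero_mem _

theorem mulₗ_mem_aSpan (u v : AeSpace F) : u ⋆ v ∈ aSpan F := by
  rw [mulₗ_apply]
  exact Submodule.finsuppSum_mem _ _ _ _ fun b _ => Submodule.finsuppSum_mem _ _ _ _
    fun b' _ => Submodule.smul_mem _ _ (mulB_mem_aSpan ε b b')

theorem mulₗ_eq_zero_of_mem_aSpan {u v : AeSpace F} (hu : u ∈ aSpan F) (hv : v ∈ aSpan F) :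
    u ⋆ v = 0 := by
  rw [aSpan, Finsupp.mem_supported] at hu hv
  rw [mulₗ_apply]
  refine Finset.sum_eq_zero fun b hb => Finset.sum_eq_zero fun b' hb' => ?_
  obtain ⟨_, rfl⟩ := hu hb
  obtain ⟨_, rfl⟩ := hv hb'
  simp [mulB]

theorem associator_xEl_xEl_aEl (hchar : (2 : F) ≠ 0) (m n : ℕ) :
    (mulₗ F ε).associator (xEl F) (xEl F) (aEl F m n) =
      -(2⁻¹ : F) • (aEl F m (n + 2) - aEl F (m + 2) n) := by
  rw [LinearMap.associator_apply,
    mulₗ_eq_zero_of_mem_aSpan ε (mulₗ_mem_aSpan ε _ _) (aEl_mem_aSpan m n), zero_sub]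
  rcases Nat.even_or_odd n with hn | hn
  · simp only [xEl_mul_aEl_of_even ε hn, map_sub, map_smul, xEl_mul_aEl_of_odd ε hn.add_one]
    simp only [add_assoc, Nat.reduceAdd, Nat.add_sub_cancel, pow_succ]
    rcases neg_one_pow_eq_or F m with h | h <;> simp only [h] <;>
      match_scalars <;> field_simp <;> ring
  · have hn' : n - 1 + 1 = n := Nat.sub_add_cancel hn.pos
    simp only [xEl_mul_aEl_of_odd ε hn, map_add, map_sub, map_smul,
      xEl_mul_aEl_of_even ε hn.add_one, xEl_mul_aEl_of_even ε (Nat.Odd.sub_odd hn odd_one), hn']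
    simp only [add_assoc, Nat.reduceAdd, pow_succ]
    rcases neg_one_pow_eq_or F m with h | h <;> simp only [h] <;>
      match_scalars <;> field_simp <;> ring

theorem associator_xEl_aEl_xEl (hchar : (2 : F) ≠ 0) (m n : ℕ) :
    (mulₗ F ε).associator (xEl F) (aEl F m n) (xEl F) =
      ((-1 : F) ^ (m + n) / 2) • (aEl F m (n + 2) - aEl F (m + 2) n) := by
  rw [LinearMap.associator_apply, aEl_mul_xEl, pow_add]
  rcases Nat.even_or_odd n with hn | hn
  · simp only [xEl_mul_aEl_of_even ε hn, xEl_mul_aEl_of_odd ε hn.add_one, map_sub, map_smul,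
      LinearMap.sub_apply, LinearMap.smul_apply, aEl_mul_xEl, hn.neg_one_pow]
    simp only [add_assoc, Nat.reduceAdd, Nat.add_sub_cancel]
    rcases neg_one_pow_eq_or F m with h | h <;> simp only [h] <;>
      match_scalars <;> field_simp <;> ring
  · have hn' : n - 1 + 1 = n := Nat.sub_add_cancel hn.pos
    simp only [xEl_mul_aEl_of_odd ε hn, xEl_mul_aEl_of_even ε hn.add_one, map_add, map_sub,
      map_smul, LinearMap.add_apply, LinearMap.sub_apply, LinearMap.smul_apply, aEl_mul_xEl, hn',
      hn.neg_one_pow]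
    simp only [add_assoc, Nat.reduceAdd]
    rcases neg_one_pow_eq_or F m with h | h <;> simp only [h] <;>
      match_scalars <;> field_simp <;> ring

theorem superRightAlternator_single (hchar : (2 : F) ≠ 0) (b₁ b₂ b₃ : AeBasis) :
    (mulₗ F ε).superRightAlternator ((-1 : F) ^ (parB b₂ * parB b₃))
      (Finsupp.single b₁ 1) (Finsupp.single b₂ 1) (Finsupp.single b₃ 1) = 0 := by
  have two_mem := (mulₗ F ε).superRightAlternator_eq_zero_of_two_mem (mulₗ_mem_aSpan ε)
    fun _ hu _ hv => mulₗ_eq_zero_of_mem_aSpan ε hu hv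
  match b₁, b₂, b₃ with
  | _, none, none =>
    rw [show (-1 : F) ^ (parB none * parB none) = -1 by simp [parB]]
    exact (mulₗ F ε).superRightAlternator_neg_one_self _ _
  | none, none, some (m, n) =>
    rw [show parB none * parB (some (m, n)) = (m + n) % 2 from one_mul _,
      ← neg_one_pow_eq_pow_mod_two]
    change (mulₗ F ε).superRightAlternator _ (xEl F) (xEl F) (aEl F m n) = 0
    rw [LinearMap.superRightAlternator_apply, associator_xEl_xEl_aEl ε hchar,
      associator_xEl_aEl_xEl ε hchar]
    rcases neg_one_pow_eq_or F (m + n) with h | h <;> rw [h] <;> module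
  | none, some (m, n), none =>
    rw [show parB (some (m, n)) * parB none = (m + n) % 2 from mul_one _,
      ← neg_one_pow_eq_pow_mod_two]
    change (mulₗ F ε).superRightAlternator _ (xEl F) (aEl F m n) (xEl F) = 0
    rw [LinearMap.superRightAlternator_apply, associator_xEl_xEl_aEl ε hchar,
      associator_xEl_aEl_xEl ε hchar]
    rcases neg_one_pow_eq_or F (m + n) with h | h <;> rw [h] <;> module
  | _, some (k, l), some (m, n) =>
    exact two_mem _ (.inr (.inr ⟨aEl_mem_aSpan k l, aEl_mem_aSpan m n⟩))
  | some (i, j), none, some (m, n) =>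
    exact two_mem _ (.inr (.inl ⟨aEl_mem_aSpan i j, aEl_mem_aSpan m n⟩))
  | some (i, j), some (k, l), none =>
    exact two_mem _ (.inl ⟨aEl_mem_aSpan i j, aEl_mem_aSpan k l⟩)

end AeAlgebra

theorem stmt_12_general {F : Type*} [Field F] (hchar : (2 : F) ≠ 0)
    (ε : F)
    (q r : ℕ) (a b c : AeSpace F)
    (hb : IsHomog q b) (hc : IsHomog r c) :
    (mulA F ε (mulA F ε a b) c - mulA F ε a (mulA F ε b c))
      + ((-1 : F) ^ (q * r)) •
        (mulA F ε (mulA F ε a c) b - mulA F ε a (mulA F ε c b)) = 0 := by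
  have sign : ∀ j ∈ b.support, ∀ k ∈ c.support,
      (-1 : F) ^ (q * r) = (-1) ^ (parB j * parB k) := fun j hj k hk => by
    rw [neg_one_pow_eq_pow_mod_two, Nat.mul_mod, ← hb j hj, ← hc k hk,
      ← neg_one_pow_eq_pow_mod_two]
  have h := Finsupp.trilinear_eq_zero_of_single
    ((mulₗ F ε).superRightAlternator ((-1 : F) ^ (q * r))) (a := a) fun i _ j hj k hk => by
      rw [sign j hj k hk]
      exact superRightAlternator_single ε hchar i j k
  simpa [mulₗ_apply] using h

/-- `A^(ε)` satisfies the super right-alternative identity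
`(a,b,c) + (−1)^{|b||c|}(a,c,b) = 0` for homogeneous `a`, `b`, `c`. -/
theorem stmt_12 {F : Type*} [Field F] (hchar : (2 : F) ≠ 0)
    (ε : F) (hε : ε = 0 ∨ ε = 1)
    (p q r : ℕ) (a b c : AeSpace F)
    (ha : IsHomog p a) (hb : IsHomog q b) (hc : IsHomog r c) :
    (mulA F ε (mulA F ε a b) c - mulA F ε a (mulA F ε b c))
      + ((-1 : F) ^ (q * r)) •
        (mulA F ε (mulA F ε a c) b - mulA F ε a (mulA F ε c b)) = 0 :=
  stmt_12_general hchar ε q r a b c hb hc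
end
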